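/- arXiv:2201.12340 — 2 statements merged into one kernel-verified Lean document; each statement's English description precedes it below -/
import Mathlib

section
/- With the notation of the two-sided power iteration φⁿ⁺¹ = Ĉ φⁿ D̂ / ‖Ĉ φⁿ D̂‖, where Ĉ = VΛV⁻¹, D̂ = U⁻¹ΣU with strictly dominant product eigenvalue λ₁σ₁ > 0, and φ⁰ = VαU with α₁₁ > 0 (eigenvectors v₁, u₁ of unit Frobenius norm), the iterates satisfy lim_{n→∞} φⁿ = v₁ u₁ᵀ / ‖v₁ u₁ᵀ‖. -/
open Matrix Filter

/-!
Writing `Ĉ = VΛV⁻¹` and `D̂ = U⁻¹ΣU`, the iterates are positive multiples of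
`Ĉⁿ φ⁰ D̂ⁿ = V (Λⁿ α Σⁿ) U`, whose `(i, j)` core entry is `(λᵢσⱼ)ⁿ αᵢⱼ`. Dividing by
`(λ₁σ₁)ⁿ` kills every entry except the dominant one, so the rescaled iterates tend to
`α₁₁ v₁u₁ᵀ ≠ 0`; normalization is continuous away from `0` and blind to positive factors,
hence `φⁿ → v₁u₁ᵀ / ‖v₁u₁ᵀ‖`.
-/

/-- Frobenius norm of a real matrix. -/
noncomputable def frobNorm {N M : ℕ} (A : Matrix (Fin N) (Fin M) ℝ) : ℝ :=
  Real.sqrt (∑ i, ∑ j, (A i j) ^ 2)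

section FrobNorm

variable {N M : ℕ}

lemma frobNorm_pos {A : Matrix (Fin N) (Fin M) ℝ} (hA : A ≠ 0) : 0 < frobNorm A := by
  obtain ⟨i, j, hij⟩ : ∃ i j, A i j ≠ 0 := by
    by_contra! h
    exact hA (Matrix.ext h)
  refine Real.sqrt_pos.2 <| Finset.sum_pos' (fun i _ => Finset.sum_nonneg fun j _ => sq_nonneg _)
    ⟨i, Finset.mem_univ i, Finset.sum_pos' (fun j _ => sq_nonneg _)
      ⟨j, Finset.mem_univ j, by positivity⟩⟩

lemma frobNorm_smul (c : ℝ) (A : Matrix (Fin N) (Fin M) ℝ) :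
    frobNorm (c • A) = |c| * frobNorm A := by
  simp only [frobNorm, Matrix.smul_apply, smul_eq_mul, mul_pow, ← Finset.mul_sum]
  rw [Real.sqrt_mul (sq_nonneg c), Real.sqrt_sq_eq_abs]

lemma continuous_frobNorm : Continuous (frobNorm (N := N) (M := M)) :=
  Real.continuous_sqrt.comp <| continuous_finsetSum _ fun i _ =>
    continuous_finsetSum _ fun j _ => (continuous_id.matrix_elem i j).pow 2

noncomputable def frobNormalize (A : Matrix (Fin N) (Fin M) ℝ) : Matrix (Fin N) (Fin M) ℝ :=
  (frobNorm A)⁻¹ • A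

lemma frobNormalize_smul_of_pos {c : ℝ} (hc : 0 < c) (A : Matrix (Fin N) (Fin M) ℝ) :
    frobNormalize (c • A) = frobNormalize A := by
  rw [frobNormalize, frobNormalize, frobNorm_smul, abs_of_pos hc, smul_smul, _root_.mul_inv_rev,
    mul_assoc, inv_mul_cancel₀ hc.ne', mul_one]

lemma continuousAt_frobNormalize {L : Matrix (Fin N) (Fin M) ℝ} (hL : L ≠ 0) :
    ContinuousAt frobNormalize L :=
  ((continuous_frobNorm.continuousAt.inv₀ (frobNorm_pos hL).ne').smul continuousAt_id :)

lemma tendsto_frobNormalize_of_smul_tendsto {X : ℕ → Matrix (Fin N) (Fin M) ℝ} {c : ℕ → ℝ}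
    {L : Matrix (Fin N) (Fin M) ℝ} (hc : ∀ n, 0 < c n)
    (hX : Tendsto (fun n => c n • X n) atTop (nhds L)) (hL : L ≠ 0) :
    Tendsto (fun n => frobNormalize (X n)) atTop (nhds (frobNormalize L)) := by
  simpa only [Function.comp_def, frobNormalize_smul_of_pos (hc _)] using
    (continuousAt_frobNormalize hL).tendsto.comp hX

end FrobNorm

lemma exists_pos_smul_of_iterate_frobNormalize {N M : ℕ} {C : Matrix (Fin N) (Fin N) ℝ}
    {D : Matrix (Fin M) (Fin M) ℝ} {φ : ℕ → Matrix (Fin N) (Fin M) ℝ}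
    (hne : ∀ n, C ^ (n + 1) * φ 0 * D ^ (n + 1) ≠ 0)
    (hiter : ∀ n, φ (n + 1) = frobNormalize (C * φ n * D)) (n : ℕ) :
    ∃ c : ℝ, 0 < c ∧ φ n = c • (C ^ n * φ 0 * D ^ n) := by
  induction n with
  | zero => exact ⟨1, one_pos, by simp⟩
  | succ n ih =>
    obtain ⟨c, hc, hφ⟩ := ih
    refine ⟨(frobNorm (C ^ (n + 1) * φ 0 * D ^ (n + 1)))⁻¹, inv_pos.2 (frobNorm_pos (hne n)), ?_⟩
    rw [hiter, hφ, Matrix.mul_smul, Matrix.smul_mul, frobNormalize_smul_of_pos hc, pow_succ',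
      pow_succ]
    simp only [frobNormalize, Matrix.mul_assoc]

lemma iterate_frobNormalize_eq {N M : ℕ} {C : Matrix (Fin N) (Fin N) ℝ}
    {D : Matrix (Fin M) (Fin M) ℝ} {φ : ℕ → Matrix (Fin N) (Fin M) ℝ}
    (hne : ∀ n, C ^ (n + 1) * φ 0 * D ^ (n + 1) ≠ 0)
    (hiter : ∀ n, φ (n + 1) = frobNormalize (C * φ n * D)) (n : ℕ) :
    φ (n + 1) = frobNormalize (C ^ (n + 1) * φ 0 * D ^ (n + 1)) := by
  obtain ⟨c, hc, hφ⟩ := exists_pos_smul_of_iterate_frobNormalize hne hiter n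
  rw [hiter, hφ, Matrix.mul_smul, Matrix.smul_mul, frobNormalize_smul_of_pos hc, pow_succ',
    pow_succ]
  simp only [Matrix.mul_assoc]

lemma pow_mul_conj_mul_pow {l n R : Type*} [Fintype l] [Fintype n] [DecidableEq l]
    [DecidableEq n] [Semiring R] {C Λ V : Matrix l l R} {D S U : Matrix n n R}
    (hC : C * V = V * Λ) (hD : U * D = S * U) (X : Matrix l n R) (k : ℕ) :
    C ^ k * (V * X * U) * D ^ k = V * (Λ ^ k * X * S ^ k) * U := by
  have hCk : C ^ k * V = V * Λ ^ k := ((SemiconjBy.pow_right hC.symm k).eq).symm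
  have hDk : U * D ^ k = S ^ k * U := (SemiconjBy.pow_right hD k).eq
  calc C ^ k * (V * X * U) * D ^ k = (C ^ k * V) * X * (U * D ^ k) := by
        simp only [Matrix.mul_assoc]
    _ = V * (Λ ^ k * X * S ^ k) * U := by
        rw [hCk, hDk]; simp only [Matrix.mul_assoc]

lemma mul_single_mul {l m n p R : Type*} [Fintype m] [Fintype n] [DecidableEq m] [DecidableEq n]
    [CommSemiring R] (V : Matrix l m R) (U : Matrix n p R) (i₀ : m) (j₀ : n) (a : R) :
    V * single i₀ j₀ a * U = a • of fun i j => V i i₀ * U j₀ j := by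
  ext i j
  simp only [single, ite_and, Matrix.mul_apply, of_apply, mul_ite, mul_zero, Finset.sum_ite_eq,
    Finset.mem_univ, ↓reduceIte, ite_mul, zero_mul, Matrix.smul_apply, smul_eq_mul]
  ring

lemma mul_mul_ne_zero_of_isUnit_det {l m R : Type*} [Fintype l] [Fintype m] [DecidableEq l]
    [DecidableEq m] [CommRing R] {V : Matrix l l R} {U : Matrix m m R} (hV : IsUnit V.det)
    (hU : IsUnit U.det) {X : Matrix l m R} (hX : X ≠ 0) : V * X * U ≠ 0 := by
  intro h
  apply hX
  simpa [Matrix.mul_assoc, nonsing_inv_mul_cancel_left _ _ hV,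
    mul_nonsing_inv_cancel_right _ _ hU] using congrArg (fun Y => V⁻¹ * Y * U⁻¹) h

section DiagonalPow

variable {l m : Type*} [Fintype l] [Fintype m] [DecidableEq l] [DecidableEq m]

lemma diagonal_pow_mul_mul_diagonal_pow_apply {R : Type*} [CommSemiring R] (lam : l → R)
    (sig : m → R) (α : Matrix l m R) (n : ℕ) (i : l) (j : m) :
    (diagonal lam ^ n * α * diagonal sig ^ n) i j = (lam i * sig j) ^ n * α i j := by
  simp only [diagonal_pow, mul_diagonal, diagonal_mul, Pi.pow_apply]
  ring

lemma tendsto_smul_diagonal_pow_mul_mul_diagonal_pow {lam : l → ℝ} {sig : m → ℝ} {i₀ : l}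
    {j₀ : m} (hk : lam i₀ * sig j₀ ≠ 0)
    (hdom : ∀ i j, (i, j) ≠ (i₀, j₀) → |lam i * sig j| < |lam i₀ * sig j₀|) (α : Matrix l m ℝ) :
    Tendsto (fun n => ((lam i₀ * sig j₀) ^ n)⁻¹ • (diagonal lam ^ n * α * diagonal sig ^ n))
      atTop (nhds (single i₀ j₀ (α i₀ j₀))) := by
  refine tendsto_pi_nhds.2 fun i => tendsto_pi_nhds.2 fun j => ?_
  have hentry (n : ℕ) :
      (((lam i₀ * sig j₀) ^ n)⁻¹ • (diagonal lam ^ n * α * diagonal sig ^ n)) i j =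
        (lam i * sig j / (lam i₀ * sig j₀)) ^ n * α i j := by
    rw [Matrix.smul_apply, diagonal_pow_mul_mul_diagonal_pow_apply, smul_eq_mul, div_pow,
      div_eq_inv_mul, mul_assoc]
  simp only [hentry]
  by_cases hij : (i, j) = (i₀, j₀)
  · obtain ⟨rfl, rfl⟩ := Prod.ext_iff.1 hij
    simp [div_self hk]
  · have hr : |lam i * sig j / (lam i₀ * sig j₀)| < 1 := by
      rw [abs_div, div_lt_one (abs_pos.2 hk)]
      exact hdom i j hij
    rw [single_apply_of_ne _ _ _ _ _ fun h => hij (Prod.ext h.1.symm h.2.symm)]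
    simpa using (tendsto_pow_atTop_nhds_zero_of_abs_lt_one hr).mul_const (α i j)

variable {C V : Matrix l l ℝ} {D U : Matrix m m ℝ} {lam : l → ℝ} {sig : m → ℝ}

lemma pow_mul_conj_mul_pow_ne_zero (hV : IsUnit V.det) (hU : IsUnit U.det)
    (hC : C * V = V * diagonal lam) (hD : U * D = diagonal sig * U) {α : Matrix l m ℝ} {i₀ : l}
    {j₀ : m} (hk : lam i₀ * sig j₀ ≠ 0) (hα : α i₀ j₀ ≠ 0) (n : ℕ) :
    C ^ n * (V * α * U) * D ^ n ≠ 0 := by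
  rw [pow_mul_conj_mul_pow hC hD]
  refine mul_mul_ne_zero_of_isUnit_det hV hU fun h => ?_
  have h₀ := congrFun (congrFun h i₀) j₀
  rw [diagonal_pow_mul_mul_diagonal_pow_apply] at h₀
  exact mul_ne_zero (pow_ne_zero n hk) hα h₀

lemma tendsto_smul_pow_mul_conj_mul_pow (hC : C * V = V * diagonal lam)
    (hD : U * D = diagonal sig * U) {i₀ : l} {j₀ : m} (hk : lam i₀ * sig j₀ ≠ 0)
    (hdom : ∀ i j, (i, j) ≠ (i₀, j₀) → |lam i * sig j| < |lam i₀ * sig j₀|) (α : Matrix l m ℝ) :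
    Tendsto (fun n => ((lam i₀ * sig j₀) ^ n)⁻¹ • (C ^ n * (V * α * U) * D ^ n)) atTop
      (nhds (V * single i₀ j₀ (α i₀ j₀) * U)) := by
  have hcont : Continuous fun Y : Matrix l m ℝ => V * Y * U :=
    (continuous_const.matrix_mul continuous_id).matrix_mul continuous_const
  refine ((hcont.tendsto _).comp
    (tendsto_smul_diagonal_pow_mul_mul_diagonal_pow hk hdom α)).congr fun n => ?_
  rw [Function.comp_apply, pow_mul_conj_mul_pow hC hD, Matrix.mul_smul, Matrix.smul_mul]

end DiagonalPow

theorem stmt2_general {N M : ℕ} [NeZero N] [NeZero M]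
    (V : Matrix (Fin N) (Fin N) ℝ) (U : Matrix (Fin M) (Fin M) ℝ)
    (hV : IsUnit V.det) (hU : IsUnit U.det)
    (lam : Fin N → ℝ) (sig : Fin M → ℝ)
    (Chat : Matrix (Fin N) (Fin N) ℝ) (Dhat : Matrix (Fin M) (Fin M) ℝ)
    (hChat : Chat = V * Matrix.diagonal lam * V⁻¹)
    (hDhat : Dhat = U⁻¹ * Matrix.diagonal sig * U)
    (hpos : 0 < lam 0 * sig 0)
    (hdom : ∀ i j, (i, j) ≠ ((0 : Fin N), (0 : Fin M)) →
      |lam i * sig j| < lam 0 * sig 0)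
    (α : Matrix (Fin N) (Fin M) ℝ) (hα : 0 < α 0 0)
    (φ : ℕ → Matrix (Fin N) (Fin M) ℝ)
    (hφ0 : φ 0 = V * α * U)
    (hiter : ∀ n, φ (n + 1) =
      (frobNorm (Chat * φ n * Dhat))⁻¹ • (Chat * φ n * Dhat)) :
    Tendsto φ atTop
      (nhds ((frobNorm (Matrix.of fun i j => V i 0 * U 0 j))⁻¹ •
        (Matrix.of fun i j => V i 0 * U 0 j))) := by
  have hC : Chat * V = V * diagonal lam := by
    rw [hChat, nonsing_inv_mul_cancel_right _ _ hV]
  have hD : U * Dhat = diagonal sig * U := by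
    rw [hDhat, ← Matrix.mul_assoc, ← Matrix.mul_assoc, mul_nonsing_inv _ hU, Matrix.one_mul]
  have hφ := iterate_frobNormalize_eq
    (fun n => hφ0 ▸ pow_mul_conj_mul_pow_ne_zero hV hU hC hD hpos.ne' hα.ne' (n + 1)) hiter
  have hlim := tendsto_smul_pow_mul_conj_mul_pow hC hD hpos.ne'
    (fun i j h => (hdom i j h).trans_le (le_abs_self _)) α
  have hsingle : (single 0 0 (α 0 0) : Matrix (Fin N) (Fin M) ℝ) ≠ 0 := fun h =>
    hα.ne' (by simpa using congrFun (congrFun h 0) 0)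
  have := tendsto_frobNormalize_of_smul_tendsto (fun n => inv_pos.2 (pow_pos hpos (n + 1)))
    (hlim.comp (tendsto_add_atTop_nat 1)) (mul_mul_ne_zero_of_isUnit_det hV hU hsingle)
  rw [mul_single_mul, frobNormalize_smul_of_pos hα, ← hφ0] at this
  rw [← tendsto_add_atTop_iff_nat 1, funext hφ]
  exact this

/-- the two-sided power iteration converges to the normalized
rank-one matrix `v₁u₁ᵀ/‖v₁u₁ᵀ‖` built from the dominant eigenvectors. -/
theorem stmt2 {N M : ℕ} [NeZero N] [NeZero M]
    (V : Matrix (Fin N) (Fin N) ℝ) (U : Matrix (Fin M) (Fin M) ℝ)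
    (hV : IsUnit V.det) (hU : IsUnit U.det)
    (lam : Fin N → ℝ) (sig : Fin M → ℝ)
    (Chat : Matrix (Fin N) (Fin N) ℝ) (Dhat : Matrix (Fin M) (Fin M) ℝ)
    (hChat : Chat = V * Matrix.diagonal lam * V⁻¹)
    (hDhat : Dhat = U⁻¹ * Matrix.diagonal sig * U)
    (hpos : 0 < lam 0 * sig 0)
    (hdom : ∀ i j, (i, j) ≠ ((0 : Fin N), (0 : Fin M)) →
      |lam i * sig j| < lam 0 * sig 0)
    (hv1 : Real.sqrt (∑ i, (V i 0) ^ 2) = 1)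
    (hu1 : Real.sqrt (∑ j, (U 0 j) ^ 2) = 1)
    (α : Matrix (Fin N) (Fin M) ℝ) (hα : 0 < α 0 0)
    (φ : ℕ → Matrix (Fin N) (Fin M) ℝ)
    (hφ0 : φ 0 = V * α * U)
    (hnz : ∀ n, Chat * φ n * Dhat ≠ 0)
    (hiter : ∀ n, φ (n + 1) =
      (frobNorm (Chat * φ n * Dhat))⁻¹ • (Chat * φ n * Dhat)) :
    Tendsto φ atTop
      (nhds ((frobNorm (Matrix.of fun i j => V i 0 * U 0 j))⁻¹ •
        (Matrix.of fun i j => V i 0 * U 0 j))) :=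
  stmt2_general V U hV hU lam sig Chat Dhat hChat hDhat hpos hdom α hα φ hφ0 hiter
end

section
/- Let γ_n := ‖V Λ_cⁿ α‖ where V ∈ ℝ^{N×N}, Λ_c = diag(1, λ₂/λ₁, …, λ_N/λ₁) with |λⱼ/λ₁| ≤ |λ₂/λ₁| < 1 for j ≥ 2, and α ∈ ℝ^N with α₁ > 0 and the first column of V equal to a unit vector v₁. Then the normalized vectors xₙ := V Λ_cⁿ α / γ_n satisfy ‖xₙ − v₁‖ ≤ C |λ₂/λ₁|ⁿ for some constant C independent of n (for n large enough that γ_n > 0). -/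
open Matrix

/-- Euclidean norm on `Fin N → ℝ`. -/
noncomputable def eucNorm {N : ℕ} (x : Fin N → ℝ) : ℝ :=
  Real.sqrt (∑ i, (x i) ^ 2)

/-! Write `Λ_cⁿ α = α₁ e₁ + zₙ`; every entry of `zₙ` is, in absolute value, at most `rⁿ` times
the corresponding entry of `α`, so `yₙ := V Λ_cⁿ α` lies within `‖V‖ rⁿ ‖α‖` of `α₁ v₁`. For a
unit vector `u` and `a > 0`, every `y` satisfies `‖y / ‖y‖ - u‖ ≤ 2 ‖y - a u‖ / a`: rescaling `y`
to length `a` moves it by `|‖y‖ - a| ≤ ‖y - a u‖`. -/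

open scoped Matrix.Norms.L2Operator

theorem norm_inv_norm_smul_sub_le {E : Type*} [NormedAddCommGroup E] [NormedSpace ℝ E]
    {u : E} (hu : ‖u‖ = 1) (y : E) {a : ℝ} (ha : 0 < a) :
    ‖‖y‖⁻¹ • y - u‖ ≤ 2 * ‖y - a • u‖ / a := by
  have hnorm : |‖y‖ - a| ≤ ‖y - a • u‖ := by
    simpa [norm_smul, hu, abs_of_pos ha] using abs_norm_sub_norm_le y (a • u)
  have hrescale : ‖(a * ‖y‖⁻¹) • y - y‖ ≤ |‖y‖ - a| := by
    rcases eq_or_ne y 0 with rfl | hy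
    · simp
    have hy' : ‖y‖ ≠ 0 := norm_ne_zero_iff.mpr hy
    refine le_of_eq ?_
    calc ‖(a * ‖y‖⁻¹) • y - y‖ = |(a * ‖y‖⁻¹ - 1) * ‖y‖| := by
          rw [abs_mul, abs_norm, ← Real.norm_eq_abs, ← norm_smul, sub_smul, one_smul]
      _ = |‖y‖ - a| := by
          rw [sub_mul, mul_assoc, inv_mul_cancel₀ hy', mul_one, one_mul, abs_sub_comm]
  rw [le_div_iff₀ ha]
  calc ‖‖y‖⁻¹ • y - u‖ * a = ‖a • (‖y‖⁻¹ • y - u)‖ := by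
        rw [norm_smul, Real.norm_of_nonneg ha.le, mul_comm]
    _ = ‖((a * ‖y‖⁻¹) • y - y) + (y - a • u)‖ := by
        rw [smul_sub, smul_smul]
        abel_nf
    _ ≤ 2 * ‖y - a • u‖ := (norm_add_le _ _).trans (by linarith)

lemma eucNorm_eq_norm_toLp {N : ℕ} (x : Fin N → ℝ) : eucNorm x = ‖WithLp.toLp 2 x‖ := by
  simp [eucNorm, EuclideanSpace.norm_eq, sq_abs]

lemma eucNorm_le_mul_of_abs_le {N : ℕ} {x y : Fin N → ℝ} {c : ℝ} (hc : 0 ≤ c)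
    (h : ∀ i, |x i| ≤ c * |y i|) : eucNorm x ≤ c * eucNorm y := by
  rw [eucNorm, eucNorm, ← Real.sqrt_sq hc, ← Real.sqrt_mul (sq_nonneg c), Finset.mul_sum]
  gcongr with i
  rw [← sq_abs, ← sq_abs (y i), ← mul_pow]
  exact pow_le_pow_left₀ (abs_nonneg _) (h i) 2

lemma eucNorm_mulVec_le {m n : ℕ} (A : Matrix (Fin m) (Fin n) ℝ) (x : Fin n → ℝ) :
    eucNorm (A *ᵥ x) ≤ ‖A‖ * eucNorm x := by
  simpa [eucNorm_eq_norm_toLp] using A.l2_opNorm_mulVec (WithLp.toLp 2 x)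

lemma mulVec_pi_single {m n : ℕ} (A : Matrix (Fin m) (Fin n) ℝ) (j : Fin n) (a : ℝ) :
    A *ᵥ Pi.single j a = a • fun i => A i j := by
  ext i
  simp [mulVec_single, mul_comm]

lemma eucNorm_normalize_mulVec_sub_col_le {m n : ℕ} (A : Matrix (Fin m) (Fin n) ℝ) {j : Fin n}
    (hcol : eucNorm (fun i => A i j) = 1) (x : Fin n → ℝ) {a : ℝ} (ha : 0 < a) :
    eucNorm ((eucNorm (A *ᵥ x))⁻¹ • (A *ᵥ x) - fun i => A i j) ≤
      2 * (‖A‖ * eucNorm (x - Pi.single j a)) / a := by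
  rw [eucNorm_eq_norm_toLp] at hcol
  have hsub : A *ᵥ x - a • (fun i => A i j) = A *ᵥ (x - Pi.single j a) := by
    rw [mulVec_sub, mulVec_pi_single]
  calc _ ≤ 2 * eucNorm (A *ᵥ x - a • fun i => A i j) / a := by
        simpa only [eucNorm_eq_norm_toLp, WithLp.toLp_sub, WithLp.toLp_smul]
          using norm_inv_norm_smul_sub_le hcol (WithLp.toLp 2 (A *ᵥ x)) ha
    _ ≤ _ := by
        rw [hsub]
        gcongr
        exact eucNorm_mulVec_le A _

lemma abs_pow_mul_sub_single_le {N : ℕ} [NeZero N] {d : Fin N → ℝ} {r : ℝ} (hd0 : d 0 = 1)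
    (hdr : ∀ j : Fin N, j ≠ 0 → |d j| ≤ r) (hr : 0 ≤ r) (α : Fin N → ℝ) (n : ℕ) (i : Fin N) :
    |((fun i => d i ^ n * α i) - Pi.single 0 (α 0) : Fin N → ℝ) i| ≤ r ^ n * |α i| := by
  rcases eq_or_ne i 0 with rfl | hi
  · simp only [Pi.sub_apply, hd0, one_pow, one_mul, Pi.single_eq_same, sub_self, abs_zero]
    positivity
  · rw [Pi.sub_apply, Pi.single_eq_of_ne hi, sub_zero, abs_mul, abs_pow]
    gcongr
    exact hdr i hi

theorem stmt4_general {N : ℕ} [NeZero N]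
    (V : Matrix (Fin N) (Fin N) ℝ)
    (d : Fin N → ℝ) (r : ℝ)
    (hd0 : d 0 = 1)
    (hdr : ∀ j : Fin N, j ≠ 0 → |d j| ≤ r)
    (α : Fin N → ℝ) (hα : 0 < α 0)
    (hv1 : eucNorm (fun i => V i 0) = 1) :
    ∃ C : ℝ, ∀ n : ℕ,
      0 < eucNorm (V.mulVec fun i => d i ^ n * α i) →
      eucNorm
          ((eucNorm (V.mulVec fun i => d i ^ n * α i))⁻¹ •
              (V.mulVec fun i => d i ^ n * α i) -
            fun i => V i 0) ≤
        C * r ^ n := by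
  have key n := eucNorm_normalize_mulVec_sub_col_le V hv1 (fun i => d i ^ n * α i) hα
  rcases lt_or_ge r 0 with hr | hr
  · have h0 (k : Fin N) : k = 0 :=
      by_contra fun hk => (hr.trans_le (abs_nonneg _)).not_ge (hdr k hk)
    refine ⟨0, fun n _ => ?_⟩
    have hx : (fun i => d i ^ n * α i) - Pi.single 0 (α 0) = 0 := by
      ext i
      rw [h0 i]
      simp [hd0]
    have h := key n
    rw [hx] at h
    simpa [eucNorm] using h
  · refine ⟨2 * ‖V‖ * eucNorm α / α 0, fun n _ => (key n).trans ?_⟩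
    have hx := eucNorm_le_mul_of_abs_le (pow_nonneg hr n)
      (abs_pow_mul_sub_single_le hd0 hdr hr α n)
    calc 2 * (‖V‖ * eucNorm _) / α 0 ≤ 2 * (‖V‖ * (r ^ n * eucNorm α)) / α 0 := by gcongr
      _ = 2 * ‖V‖ * eucNorm α / α 0 * r ^ n := by ring

/-- the normalized vectors `xₙ = V Λ_cⁿ α / ‖V Λ_cⁿ α‖` converge to the
first column `v₁` of `V` at rate `|λ₂/λ₁|ⁿ`. -/
theorem stmt4 {N : ℕ} [NeZero N]
    (V : Matrix (Fin N) (Fin N) ℝ)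
    (d : Fin N → ℝ) (r : ℝ)
    (hd0 : d 0 = 1)
    (hdr : ∀ j : Fin N, j ≠ 0 → |d j| ≤ r) (hr1 : r < 1)
    (α : Fin N → ℝ) (hα : 0 < α 0)
    (hv1 : eucNorm (fun i => V i 0) = 1) :
    ∃ C : ℝ, ∀ n : ℕ,
      0 < eucNorm (V.mulVec fun i => d i ^ n * α i) →
      eucNorm
          ((eucNorm (V.mulVec fun i => d i ^ n * α i))⁻¹ •
              (V.mulVec fun i => d i ^ n * α i) -
            fun i => V i 0) ≤
        C * r ^ n :=
  stmt4_general V d r hd0 hdr α hα hv1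
end
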